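/- Injective-aggregation version of Theorem 2 (one step): let G be a finite directed labeled graph where node features take values in a countable set, and suppose the colors c^{(t-1)} take finitely many values. If the map (c, M, A, B) ↦ next-color is injective (WL step) and the feature update has the form f^{(t)}(v) = Φ( f^{(t-1)}(v), Σ_{u∈N(v)} ψ(f^{(t-1)}(u)), Σ_{(u,v)∈E} φ(l_E(u,v)), Σ_{(v,u)∈E} φ(l_E(v,u)) ) where ψ maps the finitely many occurring feature values to linearly independent vectors, φ is a one-hot encoding of edge labels, and Φ is injective on the (finite) set of occurring argument tuples, and if f^{(t-1)}(v) = f^{(t-1)}(u) ⟺ c^{(t-1)}(v) = c^{(t-1)}(u) for all u,v, then f^{(t)}(v) = f^{(t)}(u) ⟺ c^{(t)}(v) = c^{(t)}(u) for all u,v. -/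
import Mathlib


open Finset

/-- A directed labeled graph on vertex type `V`, with edge labels in `Z` and
vertex labels (colors) in `C`. -/
structure DLGraph (V Z C : Type) where
  adj : V → V → Bool
  lV : V → C
  lE : V → V → Z

variable {V W Z C : Type}

/-- Incoming neighbors of `v`. -/
def inNbrs [Fintype V] [DecidableEq V] (G : DLGraph V Z C) (v : V) : Finset V :=
  Finset.univ.filter (fun u => G.adj u v)

/-- Outgoing neighbors of `v`. -/
def outNbrs [Fintype V] [DecidableEq V] (G : DLGraph V Z C) (v : V) : Finset V :=
  Finset.univ.filter (fun u => G.adj v u)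

/-- All (in- or out-) neighbors of `v`. -/
def nbrs [Fintype V] [DecidableEq V] (G : DLGraph V Z C) (v : V) : Finset V :=
  Finset.univ.filter (fun u => G.adj u v ∨ G.adj v u)

/-- Number of edges incoming to `v` with label `e`. -/
def nI [Fintype V] [DecidableEq V] [DecidableEq Z] (G : DLGraph V Z C) (v : V) (e : Z) : ℕ :=
  ((inNbrs G v).filter (fun u => G.lE u v = e)).card

/-- Number of edges outgoing from `v` with label `e`. -/
def nO [Fintype V] [DecidableEq V] [DecidableEq Z] (G : DLGraph V Z C) (v : V) (e : Z) : ℕ :=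
  ((outNbrs G v).filter (fun u => G.lE v u = e)).card

/-- The set of pairs `(n^I_v(e), e)` for `e` an incoming edge label at `v`. -/
def inProfile [Fintype V] [DecidableEq V] [DecidableEq Z] (G : DLGraph V Z C) (v : V) :
    Finset (ℕ × Z) :=
  ((inNbrs G v).image (fun u => G.lE u v)).image (fun e => (nI G v e, e))

/-- The set of pairs `(n^O_v(e), e)` for `e` an outgoing edge label at `v`. -/
def outProfile [Fintype V] [DecidableEq V] [DecidableEq Z] (G : DLGraph V Z C) (v : V) :
    Finset (ℕ × Z) :=
  ((outNbrs G v).image (fun u => G.lE v u)).image (fun e => (nO G v e, e))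

/-- The Weisfeiler--Lehman coloring of a directed labeled graph, with relabeling
function `g` taking the previous color of `v`, the multiset of previous colors of the
neighbors of `v`, and the labeled in- and out-degree profiles of `v`. -/
def wl [Fintype V] [DecidableEq V] [DecidableEq Z]
    (G : DLGraph V Z C) (g : C × Multiset C × Finset (ℕ × Z) × Finset (ℕ × Z) → C) :
    ℕ → V → C
  | 0, v => G.lV v
  | t + 1, v =>
      g (wl G g t v, (nbrs G v).val.map (wl G g t), inProfile G v, outProfile G v)

/-- `f : V ≃ W` is an isomorphism of directed labeled graphs from `G` to `H`. -/
def IsIsoVia (G : DLGraph V Z C) (H : DLGraph W Z C) (f : V ≃ W) : Prop :=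
  (∀ u v, G.adj u v = H.adj (f u) (f v)) ∧
  (∀ v, G.lV v = H.lV (f v)) ∧
  (∀ u v, G.adj u v → G.lE u v = H.lE (f u) (f v))

/-- The argument tuple of the feature update `Φ`: the previous feature of `v`, the sum of
`ψ` of the previous features of the neighbors of `v`, the sum of one-hot encodings of the
labels of incoming edges, and of outgoing edges. -/
def gnnArgs {V Z C F : Type} [Fintype V] [DecidableEq V] [DecidableEq Z]
    (G : DLGraph V Z C) (fprev : V → F) (m : ℕ) (ψ : F → Fin m → ℝ) :
    V → F × (Fin m → ℝ) × (Z → ℝ) × (Z → ℝ) := fun v =>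
  (fprev v,
   ∑ u ∈ nbrs G v, ψ (fprev u),
   ∑ u ∈ inNbrs G v, Pi.single (G.lE u v) (1 : ℝ),
   ∑ u ∈ outNbrs G v, Pi.single (G.lE v u) (1 : ℝ))


/-- If two vertex functions induce the same partition, multisets of vertices have equal
images under one iff under the other. -/
lemma map_transfer {V F F' : Type} [DecidableEq F] [DecidableEq F']
    (f : V → F) (h : V → F') (hfh : ∀ a b, f a = f b ↔ h a = h b)
    {S T : Multiset V} (hST : S.map f = T.map f) : S.map h = T.map h := by
  classical
  ext b
  rw [Multiset.count_map, Multiset.count_map]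
  by_cases hb : ∃ w ∈ S, b = h w
  · obtain ⟨w, hwS, rfl⟩ := hb
    have e1 : S.filter (fun a => h w = h a) = S.filter (fun a => f w = f a) :=
      Multiset.filter_congr (fun a _ => (hfh w a).symm)
    have e2 : T.filter (fun a => h w = h a) = T.filter (fun a => f w = f a) :=
      Multiset.filter_congr (fun a _ => (hfh w a).symm)
    rw [e1, e2]
    have hc := congrArg (Multiset.count (f w)) hST
    rwa [Multiset.count_map, Multiset.count_map] at hc
  · have hbS : ∀ a ∈ S, ¬ b = h a := fun a ha hba => hb ⟨a, ha, hba⟩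
    have hbT : ∀ a ∈ T, ¬ b = h a := by
      intro a haT hba
      have hmem : f a ∈ S.map f := by rw [hST]; exact Multiset.mem_map_of_mem f haT
      obtain ⟨a', ha'S, hfa'⟩ := Multiset.mem_map.mp hmem
      exact hb ⟨a', ha'S, hba.trans ((hfh a' a).mp hfa').symm⟩
    rw [Multiset.filter_eq_nil.mpr hbS, Multiset.filter_eq_nil.mpr hbT]

/-- Linear independence of `ψ` on `P` lets us recover the multiset from the sum. -/
lemma counts_eq_of_sum_eq {F : Type} [DecidableEq F] {m : ℕ} (ψ : F → Fin m → ℝ)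
    (P : Set F) (hψ : LinearIndependent ℝ (fun x : P => ψ (x : F)))
    (Mv Mu : Multiset F) (hMv : ∀ b ∈ Mv, b ∈ P) (hMu : ∀ b ∈ Mu, b ∈ P)
    (h : (Mv.map ψ).sum = (Mu.map ψ).sum) : Mv = Mu := by
  classical
  set T : Finset F := Mv.toFinset ∪ Mu.toFinset with hTdef
  have hTP : ∀ b ∈ T, b ∈ P := by
    intro b hb
    rcases Finset.mem_union.mp hb with hb | hb
    · exact hMv b (Multiset.mem_toFinset.mp hb)
    · exact hMu b (Multiset.mem_toFinset.mp hb)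
  have hsum : ∀ M : Multiset F, M.toFinset ⊆ T →
      (M.map ψ).sum = ∑ b ∈ T, (M.count b : ℝ) • ψ b := by
    intro M hMT
    rw [Finset.sum_multiset_map_count]
    have e1 : ∑ b ∈ M.toFinset, Multiset.count b M • ψ b
        = ∑ b ∈ M.toFinset, (Multiset.count b M : ℝ) • ψ b :=
      Finset.sum_congr rfl fun b _ => (Nat.cast_smul_eq_nsmul ℝ _ _).symm
    rw [e1]
    exact Finset.sum_subset hMT (fun b _ hb => by
      simp [Multiset.count_eq_zero_of_notMem (fun hmem => hb (Multiset.mem_toFinset.mpr hmem))])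
  have h0 : ∑ b ∈ T, ((Mv.count b : ℝ) - (Mu.count b : ℝ)) • ψ b = 0 := by
    simp only [sub_smul, Finset.sum_sub_distrib]
    rw [← hsum Mv Finset.subset_union_left, ← hsum Mu Finset.subset_union_right, h, sub_self]
  set S : Finset P := T.attach.map
    ⟨fun x => ⟨x.1, hTP x.1 x.2⟩, fun a b hab => Subtype.ext (congrArg Subtype.val hab : (a:F) = b)⟩ with hSdef
  have hS0 : ∑ i ∈ S, ((Mv.count (i : F) : ℝ) - (Mu.count (i : F) : ℝ)) • ψ (i : F) = 0 := by
    rw [hSdef, Finset.sum_map]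
    exact (Finset.sum_attach T fun b => ((Mv.count b : ℝ) - (Mu.count b : ℝ)) • ψ b).trans h0
  have hcount : ∀ b ∈ T, (Mv.count b : ℝ) = (Mu.count b : ℝ) := by
    intro b hb
    have hmem : (⟨b, hTP b hb⟩ : P) ∈ S := by
      rw [hSdef, Finset.mem_map]
      exact ⟨⟨b, hb⟩, Finset.mem_attach _ _, rfl⟩
    have := linearIndependent_iff'.mp hψ S
      (fun i => (Mv.count (i : F) : ℝ) - (Mu.count (i : F) : ℝ)) hS0 ⟨b, hTP b hb⟩ hmem
    have h2 : (Mv.count b : ℝ) - (Mu.count b : ℝ) = 0 := this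
    linarith
  rw [Multiset.ext]
  intro b
  by_cases hb : b ∈ T
  · exact_mod_cast hcount b hb
  · rw [Multiset.count_eq_zero_of_notMem fun hm => hb (Finset.mem_union_left _ (Multiset.mem_toFinset.mpr hm)),
      Multiset.count_eq_zero_of_notMem fun hm => hb (Finset.mem_union_right _ (Multiset.mem_toFinset.mpr hm))]

/-- Label-count profiles agree iff all labeled counts agree. -/
lemma profile_eq_iff {V Z : Type} [DecidableEq Z] (s t : Finset V) (a b : V → Z) :
    (s.image a).image (fun e => ((s.filter (fun u => a u = e)).card, e)) =
      (t.image b).image (fun e => ((t.filter (fun u => b u = e)).card, e)) ↔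
    ∀ e, (s.filter (fun u => a u = e)).card = (t.filter (fun u => b u = e)).card := by
  have hmem : ∀ (s : Finset V) (a : V → Z) (p : ℕ × Z),
      p ∈ (s.image a).image (fun e => ((s.filter (fun u => a u = e)).card, e)) ↔
      p.1 = (s.filter (fun u => a u = p.2)).card ∧ 0 < (s.filter (fun u => a u = p.2)).card := by
    intro s a p
    obtain ⟨n, e⟩ := p
    simp only [Finset.mem_image, Prod.mk.injEq]
    constructor
    · rintro ⟨e', ⟨u, hu, rfl⟩, h1, rfl⟩
      exact ⟨h1.symm, Finset.card_pos.mpr ⟨u, Finset.mem_filter.mpr ⟨hu, rfl⟩⟩⟩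
    · rintro ⟨h1, h2⟩
      obtain ⟨u, hu⟩ := Finset.card_pos.mp h2
      obtain ⟨hus, hue⟩ := Finset.mem_filter.mp hu
      exact ⟨e, ⟨u, hus, hue⟩, h1.symm, rfl⟩
  constructor
  · intro h e
    by_cases he : 0 < (s.filter (fun u => a u = e)).card
    · have hm := (hmem s a ((s.filter (fun u => a u = e)).card, e)).mpr ⟨rfl, he⟩
      rw [h] at hm
      exact ((hmem t b _).mp hm).1
    · by_cases he' : 0 < (t.filter (fun u => b u = e)).card
      · have hm := (hmem t b ((t.filter (fun u => b u = e)).card, e)).mpr ⟨rfl, he'⟩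
        rw [← h] at hm
        exact absurd ((hmem s a _).mp hm).2 he
      · omega
  · intro h
    ext p
    rw [hmem, hmem, h p.2]

/-- One-hot sums agree iff all labeled counts agree. -/
lemma onehot_eq_iff {V Z : Type} [DecidableEq Z] (s t : Finset V) (a b : V → Z) :
    (∑ u ∈ s, Pi.single (a u) (1:ℝ) : Z → ℝ) = (∑ u ∈ t, Pi.single (b u) (1:ℝ) : Z → ℝ) ↔
    ∀ e, (s.filter (fun u => a u = e)).card = (t.filter (fun u => b u = e)).card := by
  have hfil : ∀ (s : Finset V) (a : V → Z) (e : Z),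
      s.filter (fun u => e = a u) = s.filter (fun u => a u = e) :=
    fun s a e => Finset.filter_congr (fun u _ => eq_comm)
  constructor
  · intro h e
    have hc := congrFun h e
    simp only [Finset.sum_apply, Pi.single_apply] at hc
    rw [Finset.sum_boole, Finset.sum_boole, hfil, hfil] at hc
    exact_mod_cast hc
  · intro h
    funext e
    simp only [Finset.sum_apply, Pi.single_apply]
    rw [Finset.sum_boole, Finset.sum_boole, hfil, hfil]
    exact_mod_cast h e

/-- injective-aggregation version of Theorem 2, one step: if `ψ` maps the
occurring feature values to linearly independent vectors, the edge encoding is one-hot,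
`Φ` is injective on the occurring argument tuples, and the previous features separate
vertices exactly as the WL colors `c⁽ᵗ⁾` do, then the updated features
`f⁽ᵗ⁺¹⁾(v) = Φ(gnnArgs v)` separate vertices exactly as `c⁽ᵗ⁺¹⁾` does. -/
theorem injective_aggregation_step {V Z C F F' : Type} [Fintype V] [DecidableEq V]
    [Fintype Z] [DecidableEq Z] [Countable F]
    (G : DLGraph V Z C)
    (g : C × Multiset C × Finset (ℕ × Z) × Finset (ℕ × Z) → C)
    (hg : Function.Injective g) (t : ℕ)
    (fprev : V → F) (m : ℕ) (ψ : F → Fin m → ℝ)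
    (Φ : F × (Fin m → ℝ) × (Z → ℝ) × (Z → ℝ) → F')
    (hψ : LinearIndependent ℝ (fun x : Set.range fprev => ψ (x : F)))
    (hΦ : Set.InjOn Φ (Set.range (gnnArgs G fprev m ψ)))
    (hprev : ∀ u v : V, fprev v = fprev u ↔ wl G g t v = wl G g t u) :
    ∀ u v : V, Φ (gnnArgs G fprev m ψ v) = Φ (gnnArgs G fprev m ψ u)
      ↔ wl G g (t + 1) v = wl G g (t + 1) u := by
  classical
  intro u v
  have hwl : wl G g (t+1) v = wl G g (t+1) u ↔
      (wl G g t v = wl G g t u ∧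
        (nbrs G v).val.map (wl G g t) = (nbrs G u).val.map (wl G g t) ∧
        inProfile G v = inProfile G u ∧ outProfile G v = outProfile G u) := by
    constructor
    · intro h
      have h2 := hg h
      simpa [Prod.ext_iff] using h2
    · rintro ⟨h1, h2, h3, h4⟩
      show g _ = g _
      rw [h1, h2, h3, h4]
  have hargs : gnnArgs G fprev m ψ v = gnnArgs G fprev m ψ u ↔
      (fprev v = fprev u ∧
        (∑ w ∈ nbrs G v, ψ (fprev w)) = (∑ w ∈ nbrs G u, ψ (fprev w)) ∧
        (∑ w ∈ inNbrs G v, Pi.single (G.lE w v) (1:ℝ) : Z → ℝ)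
          = (∑ w ∈ inNbrs G u, Pi.single (G.lE w u) (1:ℝ) : Z → ℝ) ∧
        (∑ w ∈ outNbrs G v, Pi.single (G.lE v w) (1:ℝ) : Z → ℝ)
          = (∑ w ∈ outNbrs G u, Pi.single (G.lE u w) (1:ℝ) : Z → ℝ)) := by
    simp [gnnArgs, Prod.ext_iff]
  have hΦiff : Φ (gnnArgs G fprev m ψ v) = Φ (gnnArgs G fprev m ψ u)
      ↔ gnnArgs G fprev m ψ v = gnnArgs G fprev m ψ u :=
    ⟨fun h => hΦ (Set.mem_range_self v) (Set.mem_range_self u) h, fun h => congrArg Φ h⟩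
  rw [hΦiff, hargs, hwl]
  have hmapiff : ∀ a b : V, fprev a = fprev b ↔ wl G g t a = wl G g t b :=
    fun a b => hprev b a
  have c2 : (∑ w ∈ nbrs G v, ψ (fprev w)) = (∑ w ∈ nbrs G u, ψ (fprev w)) ↔
      (nbrs G v).val.map (wl G g t) = (nbrs G u).val.map (wl G g t) := by
    have e1 : ∀ w : V, (∑ x ∈ nbrs G w, ψ (fprev x))
        = (((nbrs G w).val.map fprev).map ψ).sum := by
      intro w; rw [Multiset.map_map]; rfl
    constructor
    · intro h
      have hsum : (((nbrs G v).val.map fprev).map ψ).sum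
          = (((nbrs G u).val.map fprev).map ψ).sum := by
        rw [← e1, ← e1]; exact h
      have hMv : ∀ b ∈ (nbrs G v).val.map fprev, b ∈ Set.range fprev := by
        intro b hb
        obtain ⟨w, _, rfl⟩ := Multiset.mem_map.mp hb
        exact ⟨w, rfl⟩
      have hMu : ∀ b ∈ (nbrs G u).val.map fprev, b ∈ Set.range fprev := by
        intro b hb
        obtain ⟨w, _, rfl⟩ := Multiset.mem_map.mp hb
        exact ⟨w, rfl⟩
      have heq := counts_eq_of_sum_eq ψ (Set.range fprev) hψ _ _ hMv hMu hsum
      exact map_transfer fprev (wl G g t) hmapiff heq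
    · intro h
      have heq := map_transfer (wl G g t) fprev (fun a b => (hmapiff a b).symm) h
      rw [e1, e1, heq]
  have c3 : (∑ w ∈ inNbrs G v, Pi.single (G.lE w v) (1:ℝ) : Z → ℝ)
        = (∑ w ∈ inNbrs G u, Pi.single (G.lE w u) (1:ℝ) : Z → ℝ) ↔
      inProfile G v = inProfile G u := by
    rw [onehot_eq_iff]
    unfold inProfile nI
    exact (profile_eq_iff _ _ _ _).symm
  have c4 : (∑ w ∈ outNbrs G v, Pi.single (G.lE v w) (1:ℝ) : Z → ℝ)
        = (∑ w ∈ outNbrs G u, Pi.single (G.lE u w) (1:ℝ) : Z → ℝ) ↔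
      outProfile G v = outProfile G u := by
    rw [onehot_eq_iff]
    unfold outProfile nO
    exact (profile_eq_iff _ _ _ _).symm
  exact and_congr (hprev u v) (and_congr c2 (and_congr c3 c4))
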